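/- arXiv:1004.4347 — 2 statements merged into one kernel-verified Lean document; each statement's English description precedes it below -/
import Mathlib

section
/- Let f assign a nonnegative real weight to each interval [a,b) with a < b, and define the joint weight of a segmentation m as W(m) = ∏_{r ∈ m} f(r). Let Z_K = ∑_{m ∈ M_K} W(m) where M_K is the set of segmentations of {1,...,n} into K segments, assumed positive. Define P(m|K) = W(m)/Z_K and B_{K,k}(t) = ∑_{m : τ_k(m) = t} P(m|K). Then B_{K,k}(t) = F_{1,t}(k-1) · F_{t,n+1}(K-k+1) / Z_K, where F_{a,b}(j) = ∑_{m ∈ M_j([a,b))} ∏_{r ∈ m} f(r) (with F_{a,b}(0) = 1 if a = b and 0 otherwise, and F_{a,b}(j) = 0 if a > b). -/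
/-- Segmentations of `[a, b)` into `k` contiguous segments, as strictly increasing
sequences `a = t 0 < ... < t k = b` with values in `{0, ..., n+1}`. -/
def Seg (n k a b : ℕ) : Finset (Fin (k + 1) → Fin (n + 2)) :=
  Finset.univ.filter fun t =>
    (∀ l : Fin k, t l.castSucc < t l.succ) ∧ (t 0 : ℕ) = a ∧ (t (Fin.last k) : ℕ) = b

/-- Multiplicative weight of a segmentation: product of `f` over its segments. -/
def W (n k : ℕ) (f : ℕ → ℕ → ℝ) (t : Fin (k + 1) → Fin (n + 2)) : ℝ :=
  ∏ l : Fin k, f (t l.castSucc) (t l.succ)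

/-!
Cutting a segmentation into `k + j` segments at its `k`-th boundary point `t` is a bijection
onto pairs (segmentation of `[a, t)` into `k` segments, segmentation of `[t, b)` into `j`
segments), and the weight is multiplicative across the cut. Hence the total weight of the
segmentations whose `k`-th boundary is `t` is `F_{a,t}(k) · F_{t,b}(j)`; dividing by `Z` gives
the posterior.
-/

namespace Seg

variable {α : Type*} {k j : ℕ}

def drop (k : ℕ) (m : Fin (k + j + 1) → α) : Fin (j + 1) → α :=
  fun i => m ⟨k + i, by omega⟩

/-- Inverse of `m ↦ (Fin.take (k + 1) _ m, drop k m)` on pairs with `p.1 (Fin.last k) = p.2 0`;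
the shared entry is read from `p.1`. -/
def concat (p : (Fin (k + 1) → α) × (Fin (j + 1) → α)) : Fin (k + j + 1) → α :=
  fun i => if h : (i : ℕ) ≤ k then p.1 ⟨i, by omega⟩ else p.2 ⟨i - k, by omega⟩

theorem take_concat (p : (Fin (k + 1) → α) × (Fin (j + 1) → α)) :
    Fin.take (k + 1) (by omega) (concat p) = p.1 := by
  funext i
  simp [concat, Nat.lt_succ_iff.mp i.is_lt]

theorem drop_concat {p : (Fin (k + 1) → α) × (Fin (j + 1) → α)}
    (h : p.1 (Fin.last k) = p.2 0) : drop k (concat p) = p.2 := by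
  funext i
  by_cases hi : (i : ℕ) = 0
  · obtain rfl : i = 0 := Fin.ext hi
    simp only [drop, concat, Fin.val_zero, add_zero, le_refl, dif_pos]
    exact h
  · simp only [drop, concat, dif_neg (by omega : ¬k + (i : ℕ) ≤ k)]
    simp

theorem concat_take_drop (m : Fin (k + j + 1) → α) :
    concat (Fin.take (k + 1) (by omega) m, drop k m) = m := by
  funext i
  simp only [concat, drop, Fin.take_apply]
  split_ifs
  · rfl
  · congr
    omega

theorem mem_filter_iff_take_drop {n a b t : ℕ} (m : Fin (k + j + 1) → Fin (n + 2)) :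
    m ∈ (Seg n (k + j) a b).filter (fun m => (m ⟨k, by omega⟩ : ℕ) = t) ↔
      Fin.take (k + 1) (by omega) m ∈ Seg n k a t ∧ drop k m ∈ Seg n j t b := by
  simp only [Seg, Finset.mem_filter, Finset.mem_univ, true_and, Fin.forall_fin_add]
  exact ⟨fun ⟨⟨⟨h₁, h₂⟩, h₃, h₄⟩, h₅⟩ => ⟨⟨h₁, h₃, h₅⟩, h₂, h₅, h₄⟩,
    fun ⟨⟨h₁, h₃, h₅⟩, h₂, _, h₄⟩ => ⟨⟨⟨h₁, h₂⟩, h₃, h₄⟩, h₅⟩⟩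

theorem W_eq_mul_take_drop {n : ℕ} (f : ℕ → ℕ → ℝ) (m : Fin (k + j + 1) → Fin (n + 2)) :
    W n (k + j) f m = W n k f (Fin.take (k + 1) (by omega) m) * W n j f (drop k m) := by
  rw [W, Fin.prod_univ_add]
  rfl

theorem sum_filter_eq_mul (n a b t : ℕ) (f : ℕ → ℕ → ℝ) :
    ∑ m ∈ (Seg n (k + j) a b).filter (fun m => (m ⟨k, by omega⟩ : ℕ) = t), W n (k + j) f m
      = (∑ m ∈ Seg n k a t, W n k f m) * ∑ m ∈ Seg n j t b, W n j f m := by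
  have glue_point {p : (Fin (k + 1) → Fin (n + 2)) × (Fin (j + 1) → Fin (n + 2))}
      (hp : p ∈ Seg n k a t ×ˢ Seg n j t b) : p.1 (Fin.last k) = p.2 0 := by
    simp only [Seg, Finset.mem_product, Finset.mem_filter] at hp
    exact Fin.ext (hp.1.2.2.2.trans hp.2.2.2.1.symm)
  rw [Finset.sum_mul_sum, ← Finset.sum_product']
  refine Finset.sum_nbij' (fun m => (Fin.take (k + 1) (by omega) m, drop k m)) concat
    (fun m hm => Finset.mem_product.mpr ((mem_filter_iff_take_drop m).mp hm))
    (fun p hp => (mem_filter_iff_take_drop _).mpr ?_)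
    (fun m _ => concat_take_drop m)
    (fun p hp => Prod.ext (take_concat p) (drop_concat (glue_point hp)))
    (fun m _ => W_eq_mul_take_drop f m)
  rw [take_concat, drop_concat (glue_point hp)]
  exact Finset.mem_product.mp hp

end Seg

/-- For the distribution P(m|K) = W(m)/Z_K on segmentations of
{1,...,n} into K segments, the posterior probability that the k-th change-point
is at t equals F_{1,t}(k-1)·F_{t,n+1}(K-k+1)/Z_K, where F_{a,b}(j) is the
total weight of segmentations of [a,b) into j segments. -/
theorem changepoint_posterior_factorization (n K k t : ℕ)
    (hk1 : 1 ≤ k) (hk2 : k ≤ K)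
    (f : ℕ → ℕ → ℝ)
    (Z : ℝ)
    (B : ℝ)
    (hB : B = (∑ m ∈ (Seg n K 1 (n + 1)).filter
        (fun m => (m (⟨k - 1, by omega⟩ : Fin (K + 1)) : ℕ) = t), W n K f m) / Z) :
    B = (∑ m ∈ Seg n (k - 1) 1 t, W n (k - 1) f m)
          * (∑ m ∈ Seg n (K - k + 1) t (n + 1), W n (K - k + 1) f m) / Z := by
  obtain ⟨j, rfl⟩ : ∃ j, K = (k - 1) + j := ⟨K - (k - 1), by omega⟩
  rw [hB, show k - 1 + j - k + 1 = j by omega]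
  exact congrArg (· / Z) (Seg.sum_filter_eq_mul n 1 (n + 1) t f)
end

section
/- Let f be a nonnegative weight on intervals with Z_K = ∑_{m ∈ M_K} ∏_{r ∈ m} f(r) > 0 and P(m|K) = ∏_{r ∈ m} f(r) / Z_K. Define S_{K,k}(t_1,t_2) = P({m ∈ M_K : k-th segment of m is [t_1,t_2)} | K). Then S_{K,k}(t_1,t_2) = F_{1,t_1}(k-1) · f([t_1,t_2)) · F_{t_2,n+1}(K-k) / Z_K, where F_{a,b}(j) = ∑_{m ∈ M_j([a,b))} ∏_{r ∈ m} f(r) with conventions F_{a,a}(0) = 1 and F_{a,b}(j) = 0 if j = 0, a ≠ b or if a > b. -/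
/-!
Fixing the cut points `s_{k-1} = t₁` and `s_k = t₂` cuts a segmentation of `[1, n+1)` into a
segmentation of `[1, t₁)` into `k - 1` segments, the segment `[t₁, t₂)`, and a segmentation of
`[t₂, n+1)` into `K - k` segments. This is a bijection, and the weight `W` is multiplicative along
it, so the constrained sum factors into the three partition functions.
-/

open Finset

section Split

variable {α : Type*} {K j : ℕ}

def tuplePrefix (hj : j ≤ K) (m : Fin (K + 1) → α) : Fin (j + 1) → α :=
  fun i => m ⟨i, by omega⟩

def tupleSuffix (hj : j ≤ K) (m : Fin (K + 1) → α) : Fin (K - j + 1) → α :=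
  fun i => m ⟨j + i, by omega⟩

def tupleJoin (u : Fin (j + 1) → α) (v : Fin (K - j + 1) → α) : Fin (K + 1) → α :=
  fun i => if h : (i : ℕ) ≤ j then u ⟨i, by omega⟩ else v ⟨i - j, by omega⟩

@[simp] lemma tuplePrefix_zero (hj : j ≤ K) (m : Fin (K + 1) → α) :
    tuplePrefix hj m 0 = m 0 := rfl

@[simp] lemma tuplePrefix_last (hj : j ≤ K) (m : Fin (K + 1) → α) :
    tuplePrefix hj m (Fin.last j) = m ⟨j, Nat.lt_succ_of_le hj⟩ := rfl

@[simp] lemma tupleSuffix_last (hj : j ≤ K) (m : Fin (K + 1) → α) :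
    tupleSuffix hj m (Fin.last (K - j)) = m (Fin.last K) :=
  congrArg m (Fin.ext (by simp; omega))

lemma tupleJoin_prefix_suffix (hj : j ≤ K) (m : Fin (K + 1) → α) :
    tupleJoin (tuplePrefix hj m) (tupleSuffix hj m) = m := by
  funext i
  by_cases h : (i : ℕ) ≤ j
  · simp [tupleJoin, tuplePrefix, h]
  · simp only [tupleJoin, tupleSuffix, h, dite_false]
    exact congrArg m (Fin.ext (by simp only; omega))

lemma tuplePrefix_join (hj : j ≤ K) (u : Fin (j + 1) → α) (v : Fin (K - j + 1) → α) :
    tuplePrefix hj (tupleJoin u v) = u := by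
  funext i
  simp [tuplePrefix, tupleJoin, Nat.lt_succ_iff.1 i.isLt]

lemma tupleSuffix_join (hj : j ≤ K) {u : Fin (j + 1) → α} {v : Fin (K - j + 1) → α}
    (huv : u (Fin.last j) = v 0) : tupleSuffix hj (tupleJoin u v) = v := by
  funext i
  by_cases hi : (i : ℕ) = 0
  · obtain rfl : i = 0 := Fin.ext hi
    simp only [tupleSuffix, tupleJoin, Fin.val_zero, add_zero, le_refl, dite_true]
    exact huv
  · simp only [tupleSuffix, tupleJoin]
    rw [dif_neg (by omega)]
    exact congrArg v (Fin.ext (by simp))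

variable [Preorder α]

lemma strictMono_tuplePrefix {m : Fin (K + 1) → α} (hm : StrictMono m) (hj : j ≤ K) :
    StrictMono (tuplePrefix hj m) :=
  fun _ _ h => hm h

lemma strictMono_tupleSuffix {m : Fin (K + 1) → α} (hm : StrictMono m) (hj : j ≤ K) :
    StrictMono (tupleSuffix hj m) :=
  fun _ _ h => hm (by rw [Fin.lt_def] at h ⊢; simp only; omega)

lemma strictMono_tupleJoin {u : Fin (j + 1) → α} {v : Fin (K - j + 1) → α}
    (hu : StrictMono u) (hv : StrictMono v) (huv : u (Fin.last j) = v 0) :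
    StrictMono (tupleJoin u v : Fin (K + 1) → α) := by
  refine Fin.strictMono_iff_lt_succ.2 fun l => ?_
  simp only [tupleJoin, Fin.val_castSucc, Fin.val_succ]
  by_cases hl : (l : ℕ) + 1 ≤ j
  · rw [dif_pos (by omega), dif_pos hl]
    exact hu (Fin.mk_lt_mk.2 (by omega))
  rw [dif_neg hl]
  by_cases hlj : (l : ℕ) ≤ j
  · rw [dif_pos hlj]
    calc u ⟨l, _⟩ = v 0 := by rw [← huv]; exact congrArg u (Fin.ext (by simp; omega))
      _ < v ⟨l + 1 - j, _⟩ := hv (Fin.lt_def.2 (by simp; omega))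
  · rw [dif_neg hlj]
    exact hv (Fin.mk_lt_mk.2 (by omega))

end Split

variable {n : ℕ}

lemma mem_Seg {k a b : ℕ} {t : Fin (k + 1) → Fin (n + 2)} :
    t ∈ Seg n k a b ↔ StrictMono t ∧ (t 0 : ℕ) = a ∧ (t (Fin.last k) : ℕ) = b := by
  simp [Seg, Fin.strictMono_iff_lt_succ]

lemma sum_filter_Seg_eq_sum_sum {β : Type*} [AddCommMonoid β] {K j a b c : ℕ} (hj : j ≤ K)
    (g : (Fin (j + 1) → Fin (n + 2)) → (Fin (K - j + 1) → Fin (n + 2)) → β) :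
    ∑ m ∈ (Seg n K a b).filter (fun m => (m ⟨j, Nat.lt_succ_of_le hj⟩ : ℕ) = c),
        g (tuplePrefix hj m) (tupleSuffix hj m)
      = ∑ u ∈ Seg n j a c, ∑ v ∈ Seg n (K - j) c b, g u v := by
  rw [← sum_product']
  refine sum_nbij' (fun m => (tuplePrefix hj m, tupleSuffix hj m)) (fun p => tupleJoin p.1 p.2)
    ?_ ?_ ?_ ?_ (fun _ _ => rfl)
  · intro m hm
    obtain ⟨⟨hmono, h0, hlast⟩, hc⟩ := (mem_filter.1 hm).imp_left mem_Seg.1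
    exact mem_product.2 ⟨mem_Seg.2 ⟨strictMono_tuplePrefix hmono hj, h0, hc⟩,
      mem_Seg.2 ⟨strictMono_tupleSuffix hmono hj, hc, by simpa using hlast⟩⟩
  · rintro ⟨u, v⟩ hp
    obtain ⟨⟨hu, hu0, hulast⟩, hv, hv0, hvlast⟩ :=
      (mem_product.1 hp).imp mem_Seg.1 mem_Seg.1
    have huv : u (Fin.last j) = v 0 := Fin.ext (hulast.trans hv0.symm)
    have hpre := tuplePrefix_join hj u v
    have hsuf := tupleSuffix_join hj huv
    refine mem_filter.2 ⟨mem_Seg.2 ⟨strictMono_tupleJoin hu hv huv, ?_, ?_⟩, ?_⟩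
    · rwa [← tuplePrefix_zero hj (tupleJoin u v), hpre]
    · rwa [← tupleSuffix_last hj (tupleJoin u v), hsuf]
    · rwa [← tuplePrefix_last hj (tupleJoin u v), hpre]
  · intro m _
    exact tupleJoin_prefix_suffix hj m
  · rintro ⟨u, v⟩ hp
    obtain ⟨⟨-, -, hulast⟩, -, hv0, -⟩ := (mem_product.1 hp).imp mem_Seg.1 mem_Seg.1
    exact Prod.ext (tuplePrefix_join hj u v)
      (tupleSuffix_join hj (Fin.ext (hulast.trans hv0.symm)))

lemma W_eq_W_tuplePrefix_mul_W_tupleSuffix {K j : ℕ} (hj : j ≤ K) (f : ℕ → ℕ → ℝ)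
    (m : Fin (K + 1) → Fin (n + 2)) :
    W n K f m = W n j f (tuplePrefix hj m) * W n (K - j) f (tupleSuffix hj m) := by
  rw [W, W, W, ← Fin.prod_congr' _ (Nat.add_sub_cancel' hj), Fin.prod_univ_add]
  congr 1

lemma sum_W_filter_Seg {K j a b c : ℕ} (hj : j ≤ K) (f : ℕ → ℕ → ℝ) :
    ∑ m ∈ (Seg n K a b).filter (fun m => (m ⟨j, Nat.lt_succ_of_le hj⟩ : ℕ) = c), W n K f m
      = (∑ u ∈ Seg n j a c, W n j f u) * ∑ v ∈ Seg n (K - j) c b, W n (K - j) f v := by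
  simp_rw [W_eq_W_tuplePrefix_mul_W_tupleSuffix hj f]
  rw [sum_filter_Seg_eq_sum_sum hj fun u v => W n j f u * W n (K - j) f v, sum_mul_sum]

lemma Seg_one {c d : ℕ} (hcd : c < d) (hd : d ≤ n + 1) :
    Seg n 1 c d = {![⟨c, by omega⟩, ⟨d, by omega⟩]} := by
  ext t
  simp only [Seg, mem_filter, mem_univ, true_and, mem_singleton, Fin.forall_fin_one]
  constructor
  · rintro ⟨-, h0, h1⟩
    funext i
    fin_cases i
    · exact Fin.ext h0
    · exact Fin.ext h1
  · rintro rfl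
    simp [Fin.lt_def, hcd]

lemma sum_W_Seg_one {c d : ℕ} (hcd : c < d) (hd : d ≤ n + 1) (f : ℕ → ℕ → ℝ) :
    ∑ t ∈ Seg n 1 c d, W n 1 f t = f c d := by
  simp [Seg_one hcd hd, W]

lemma sum_W_filter_segment {K k a b c d : ℕ} (hk1 : 1 ≤ k) (hk2 : k ≤ K) (hcd : c < d)
    (hd : d ≤ n + 1) (f : ℕ → ℕ → ℝ) :
    ∑ m ∈ (Seg n K a b).filter (fun m =>
        (m ⟨k - 1, (k.sub_le 1).trans_lt (Nat.lt_succ_of_le hk2)⟩ : ℕ) = c ∧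
          (m ⟨k, Nat.lt_succ_of_le hk2⟩ : ℕ) = d), W n K f m
      = (∑ u ∈ Seg n (k - 1) a c, W n (k - 1) f u) * f c d
          * ∑ v ∈ Seg n (K - k) d b, W n (K - k) f v := by
  have hj : k - 1 ≤ K := by omega
  have hsuffix : ∀ m : Fin (K + 1) → Fin (n + 2),
      tupleSuffix hj m ⟨1, by omega⟩ = m ⟨k, Nat.lt_succ_of_le hk2⟩ :=
    fun m => congrArg m (Fin.ext (by simp only; omega))
  rw [← filter_filter, sum_filter]
  simp_rw [W_eq_W_tuplePrefix_mul_W_tupleSuffix hj f, ← hsuffix]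
  rw [sum_filter_Seg_eq_sum_sum hj fun u v => if (v ⟨1, by omega⟩ : ℕ) = d
    then W n (k - 1) f u * W n (K - (k - 1)) f v else 0]
  simp_rw [← mul_ite_zero, ← mul_sum, ← sum_mul, ← sum_filter]
  rw [sum_W_filter_Seg (by omega), sum_W_Seg_one hcd hd, show K - (k - 1) - 1 = K - k by omega,
    mul_assoc]

/-- The posterior probability that the k-th segment is exactly
[t₁,t₂) equals F_{1,t₁}(k-1)·f([t₁,t₂))·F_{t₂,n+1}(K-k)/Z_K. -/
theorem segment_posterior_factorization (n K k t₁ t₂ : ℕ)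
    (hk1 : 1 ≤ k) (hk2 : k ≤ K) (ht : t₁ < t₂) (ht2 : t₂ ≤ n + 1)
    (f : ℕ → ℕ → ℝ)
    (Z : ℝ)
    (S : ℝ)
    (hS : S = (∑ m ∈ (Seg n K 1 (n + 1)).filter
        (fun m => (m (⟨k - 1, by omega⟩ : Fin (K + 1)) : ℕ) = t₁ ∧
          (m (⟨k, by omega⟩ : Fin (K + 1)) : ℕ) = t₂), W n K f m) / Z) :
    S = (∑ m ∈ Seg n (k - 1) 1 t₁, W n (k - 1) f m) * f t₁ t₂
          * (∑ m ∈ Seg n (K - k) t₂ (n + 1), W n (K - k) f m) / Z := by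
  rw [hS, sum_W_filter_segment hk1 hk2 ht ht2]
end
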